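/- For f holomorphic from 𝔻 to 𝔻 and σ on the unit circle, the boundary dilation coefficient β_f(σ) = liminf_{z→σ} (1-|f(z)|)/(1-|z|) satisfies β_f(σ) = lim_{r→1⁻} (1-|f(rσ)|)/(1-r) = lim_{r→1⁻} (1-|f(rσ)|²)/(1-r²). -/

import Mathlib

open Complex Filter Set Metric Finset

noncomputable section

/-- `f` is a holomorphic self-map of the open unit disk. -/
def HolSelfDisk (f : ℂ → ℂ) : Prop :=
  DifferentiableOn ℂ f (Metric.ball (0:ℂ) 1) ∧
    Set.MapsTo f (Metric.ball (0:ℂ) 1) (Metric.ball (0:ℂ) 1)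

/-- `B` is a finite Blaschke product of degree `d` (as a function on the unit disk). -/
def IsBlaschke (d : ℕ) (B : ℂ → ℂ) : Prop :=
  ∃ (θ : ℝ) (a : Fin d → ℂ), (∀ j, ‖a j‖ < 1) ∧
    ∀ z ∈ Metric.ball (0:ℂ) 1,
      B z = Complex.exp (θ * Complex.I) *
        ∏ j, (z - a j) / (1 - (starRingEnd ℂ) (a j) * z)

/-- The hyperbolic difference quotient `f*(z,w)`. -/
def hdq (f : ℂ → ℂ) (w : ℂ) (z : ℂ) : ℂ :=
  if z = w then
    deriv f z * ((1 - ‖z‖ ^ 2 : ℝ) : ℂ) / ((1 - ‖f z‖ ^ 2 : ℝ) : ℂ)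
  else
    ((f z - f w) / (1 - (starRingEnd ℂ) (f w) * f z)) /
      ((z - w) / (1 - (starRingEnd ℂ) w * z))

/-- Iterated hyperbolic difference quotient: `iterHdq f w h = Δ_{w (h-1), …, w 0} f`. -/
def iterHdq (f : ℂ → ℂ) (w : ℕ → ℂ) : ℕ → ℂ → ℂ
  | 0 => f
  | h + 1 => hdq (iterHdq f w h) (w h)

/-- The Stolz region of vertex `σ` and amplitude `M`. -/
def Stolz (σ : ℂ) (M : ℝ) : Set ℂ :=
  {z : ℂ | ‖z‖ < 1 ∧ ‖σ - z‖ / (1 - ‖z‖) < M}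

/-- `f` has non-tangential limit `c` at `σ`. -/
def NTLim (f : ℂ → ℂ) (σ c : ℂ) : Prop :=
  ∀ M : ℝ, 1 < M → Filter.Tendsto f (nhdsWithin σ (Stolz σ M)) (nhds c)

/-- The boundary dilation coefficient, as an extended real number. -/
def betaE (f : ℂ → ℂ) (σ : ℂ) : EReal :=
  Filter.liminf
    (fun z => (((1 - ‖f z‖) / (1 - ‖z‖) : ℝ) : EReal))
    (nhdsWithin σ (Metric.ball (0:ℂ) 1))

/-!
Letting `w → σ` in the Schwarz–Pick inequality gives Julia's inequality
`(1 - |f z|) / (1 + |f z|) * (1 - |z|²) / |σ - z|² ≤ β_f(σ)`. At `z = rσ` it bounds the radial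
quotient `(1 - |f(rσ)|) / (1 - r)` by `β (1 + |f(rσ)|) / (1 + r)`, so its limsup is at most `β`,
while its liminf is at least `β` because `rσ → σ` inside the disk. When `β < ∞` this forces
`|f(rσ)| → 1`, and the second quotient is the first one times `(1 + |f(rσ)|) / (1 + r) → 1`.
-/

open ComplexConjugate Topology

def mobius (a z : ℂ) : ℂ := (z - a) / (1 - conj a * z)

lemma one_sub_norm_le_norm_one_sub_conj_mul {a : ℂ} (ha : ‖a‖ ≤ 1) (z : ℂ) :
    1 - ‖z‖ ≤ ‖1 - conj a * z‖ := by
  have h := norm_sub_norm_le (1 : ℂ) (conj a * z)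
  rw [norm_one, norm_mul, Complex.norm_conj] at h
  nlinarith [norm_nonneg z]

lemma one_sub_conj_mul_ne_zero {a z : ℂ} (ha : ‖a‖ ≤ 1) (hz : ‖z‖ < 1) :
    1 - conj a * z ≠ 0 :=
  norm_pos_iff.mp ((sub_pos.mpr hz).trans_le (one_sub_norm_le_norm_one_sub_conj_mul ha z))

lemma normSq_one_sub_conj_mul_sub_normSq_sub (a z : ℂ) :
    normSq (1 - conj a * z) - normSq (z - a) = (1 - normSq a) * (1 - normSq z) := by
  simp only [normSq_apply, sub_re, sub_im, mul_re, mul_im, conj_re, conj_im, one_re, one_im]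
  ring

lemma one_sub_norm_mobius_sq {a z : ℂ} (ha : ‖a‖ < 1) (hz : ‖z‖ < 1) :
    1 - ‖mobius a z‖ ^ 2 = (1 - ‖a‖ ^ 2) * (1 - ‖z‖ ^ 2) / ‖1 - conj a * z‖ ^ 2 := by
  have hd : normSq (1 - conj a * z) ≠ 0 :=
    normSq_eq_zero.not.mpr (one_sub_conj_mul_ne_zero ha.le hz)
  simp only [mobius, norm_div, div_pow, Complex.sq_norm]
  rw [eq_div_iff hd, sub_mul, div_mul_cancel₀ _ hd]
  linear_combination normSq_one_sub_conj_mul_sub_normSq_sub a z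

lemma norm_mobius_lt_one {a z : ℂ} (ha : ‖a‖ < 1) (hz : ‖z‖ < 1) : ‖mobius a z‖ < 1 := by
  have hpos : 0 < 1 - ‖mobius a z‖ ^ 2 := by
    rw [one_sub_norm_mobius_sq ha hz]
    have : ‖a‖ ^ 2 < 1 := by nlinarith [norm_nonneg a]
    have : ‖z‖ ^ 2 < 1 := by nlinarith [norm_nonneg z]
    exact div_pos (mul_pos (by linarith) (by linarith))
      (pow_pos (norm_pos_iff.mpr (one_sub_conj_mul_ne_zero ha.le hz)) 2)
  nlinarith [norm_nonneg (mobius a z)]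

lemma mapsTo_mobius {a : ℂ} (ha : ‖a‖ < 1) : MapsTo (mobius a) (ball 0 1) (ball 0 1) :=
  fun _ hz => mem_ball_zero_iff.mpr (norm_mobius_lt_one ha (mem_ball_zero_iff.mp hz))

lemma differentiableOn_mobius {a : ℂ} (ha : ‖a‖ < 1) :
    DifferentiableOn ℂ (mobius a) (ball 0 1) :=
  DifferentiableOn.div (by fun_prop) (by fun_prop)
    fun _ hz => one_sub_conj_mul_ne_zero ha.le (mem_ball_zero_iff.mp hz)

lemma mobius_self (a : ℂ) : mobius a a = 0 := by simp [mobius]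

lemma mobius_neg_zero (a : ℂ) : mobius (-a) 0 = a := by simp [mobius]

lemma mobius_neg_mobius {a z : ℂ} (ha : ‖a‖ < 1) (hz : ‖z‖ < 1) :
    mobius (-a) (mobius a z) = z := by
  have hd := one_sub_conj_mul_ne_zero ha.le hz
  have hn := one_sub_conj_mul_ne_zero ha.le ha
  have hsum : mobius a z + a = z * (1 - conj a * a) / (1 - conj a * z) := by
    rw [mobius, div_add' _ _ _ hd]; ring
  have hden : 1 + conj a * mobius a z = (1 - conj a * a) / (1 - conj a * z) := by
    rw [mobius, mul_div_assoc', add_div' _ _ _ hd]; ring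
  rw [mobius, map_neg, sub_neg_eq_add, neg_mul, sub_neg_eq_add, hsum, hden,
    div_div_div_cancel_right₀ hd, mul_div_cancel_right₀ _ hn]

/-- Schwarz–Pick lemma. -/
lemma norm_mobius_le_of_mapsTo_ball {f : ℂ → ℂ} (hd : DifferentiableOn ℂ f (ball 0 1))
    (hm : MapsTo f (ball 0 1) (ball 0 1)) {z w : ℂ} (hz : ‖z‖ < 1) (hw : ‖w‖ < 1) :
    ‖mobius (f w) (f z)‖ ≤ ‖mobius w z‖ := by
  have hfw : ‖f w‖ < 1 := mem_ball_zero_iff.mp (hm (mem_ball_zero_iff.mpr hw))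
  have hnw : ‖-w‖ < 1 := by rwa [norm_neg]
  have hgd : DifferentiableOn ℂ (mobius (f w) ∘ f ∘ mobius (-w)) (ball 0 1) :=
    (differentiableOn_mobius hfw).comp ((hd.comp (differentiableOn_mobius hnw) (mapsTo_mobius hnw)))
      (hm.comp (mapsTo_mobius hnw))
  have hgm : MapsTo (mobius (f w) ∘ f ∘ mobius (-w)) (ball 0 1) (closedBall 0 1) :=
    ((mapsTo_mobius hfw).comp (hm.comp (mapsTo_mobius hnw))).mono_right ball_subset_closedBall
  have h := norm_le_norm_of_mapsTo_ball hgd hgm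
    (by simp [mobius_neg_zero, mobius_self]) (norm_mobius_lt_one hw hz)
  simpa [mobius_neg_mobius hw hz] using h

lemma one_sub_norm_sq_mul_div_le_of_mapsTo_ball {f : ℂ → ℂ}
    (hd : DifferentiableOn ℂ f (ball 0 1)) (hm : MapsTo f (ball 0 1) (ball 0 1))
    {z w : ℂ} (hz : ‖z‖ < 1) (hw : ‖w‖ < 1) :
    (1 - ‖w‖ ^ 2) * (1 - ‖z‖ ^ 2) / ‖1 - conj w * z‖ ^ 2
      ≤ (1 - ‖f w‖ ^ 2) * (1 + ‖f z‖) / (1 - ‖f z‖) := by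
  have hfz : ‖f z‖ < 1 := mem_ball_zero_iff.mp (hm (mem_ball_zero_iff.mpr hz))
  have hfw : ‖f w‖ < 1 := mem_ball_zero_iff.mp (hm (mem_ball_zero_iff.mpr hw))
  have hfz' : 0 < 1 - ‖f z‖ := sub_pos.mpr hfz
  have hpick := norm_mobius_le_of_mapsTo_ball hd hm hz hw
  calc (1 - ‖w‖ ^ 2) * (1 - ‖z‖ ^ 2) / ‖1 - conj w * z‖ ^ 2
      = 1 - ‖mobius w z‖ ^ 2 := (one_sub_norm_mobius_sq hw hz).symm
    _ ≤ 1 - ‖mobius (f w) (f z)‖ ^ 2 := by gcongr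
    _ = (1 - ‖f w‖ ^ 2) * (1 - ‖f z‖ ^ 2) / ‖1 - conj (f w) * f z‖ ^ 2 :=
      one_sub_norm_mobius_sq hfw hfz
    _ ≤ (1 - ‖f w‖ ^ 2) * (1 - ‖f z‖ ^ 2) / (1 - ‖f z‖) ^ 2 := by
      have : ‖f w‖ ^ 2 < 1 := by nlinarith [norm_nonneg (f w)]
      have : ‖f z‖ ^ 2 < 1 := by nlinarith [norm_nonneg (f z)]
      gcongr
      exact one_sub_norm_le_norm_one_sub_conj_mul hfw.le _
    _ = (1 - ‖f w‖ ^ 2) * (1 + ‖f z‖) / (1 - ‖f z‖) := by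
      field_simp
      ring

/-- The factor `(1 + ‖w‖) / 2`, which tends to `1` as `w → σ`, pays for bounding `1 + ‖f w‖`
by `2`. -/
lemma julia_quotient_le {f : ℂ → ℂ}
    (hd : DifferentiableOn ℂ f (ball 0 1)) (hm : MapsTo f (ball 0 1) (ball 0 1))
    {z w : ℂ} (hz : ‖z‖ < 1) (hw : ‖w‖ < 1) :
    (1 - ‖f z‖) / (1 + ‖f z‖) * ((1 - ‖z‖ ^ 2) * (1 + ‖w‖) / (2 * ‖1 - conj w * z‖ ^ 2))
      ≤ (1 - ‖f w‖) / (1 - ‖w‖) := by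
  have hfz : ‖f z‖ < 1 := mem_ball_zero_iff.mp (hm (mem_ball_zero_iff.mpr hz))
  have hfw : ‖f w‖ < 1 := mem_ball_zero_iff.mp (hm (mem_ball_zero_iff.mpr hw))
  have hw' : 0 < 1 - ‖w‖ := sub_pos.mpr hw
  have hfz' : 0 < 1 - ‖f z‖ := sub_pos.mpr hfz
  have hpick := one_sub_norm_sq_mul_div_le_of_mapsTo_ball hd hm hz hw
  calc (1 - ‖f z‖) / (1 + ‖f z‖) * ((1 - ‖z‖ ^ 2) * (1 + ‖w‖) / (2 * ‖1 - conj w * z‖ ^ 2))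
      = (1 - ‖f z‖) / (1 + ‖f z‖) / (2 * (1 - ‖w‖))
          * ((1 - ‖w‖ ^ 2) * (1 - ‖z‖ ^ 2) / ‖1 - conj w * z‖ ^ 2) := by
        field_simp
        ring
    _ ≤ (1 - ‖f z‖) / (1 + ‖f z‖) / (2 * (1 - ‖w‖))
          * ((1 - ‖f w‖ ^ 2) * (1 + ‖f z‖) / (1 - ‖f z‖)) := by gcongr
    _ = (1 - ‖f w‖) / (1 - ‖w‖) * ((1 + ‖f w‖) / 2) := by
      field_simp
      ring
    _ ≤ (1 - ‖f w‖) / (1 - ‖w‖) := by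
      have : 0 ≤ (1 - ‖f w‖) / (1 - ‖w‖) := div_nonneg (by linarith) hw'.le
      nlinarith

lemma norm_one_sub_conj_mul_eq_norm_sub {σ : ℂ} (hσ : ‖σ‖ = 1) (z : ℂ) :
    ‖1 - conj σ * z‖ = ‖σ - z‖ := by
  have hσσ : conj σ * σ = 1 := by rw [conj_mul', hσ]; norm_num
  rw [← hσσ, ← mul_sub, norm_mul, norm_conj, hσ, one_mul]

lemma nhdsWithin_ball_neBot {σ : ℂ} (hσ : ‖σ‖ = 1) : (𝓝[ball 0 1] σ).NeBot :=
  mem_closure_iff_nhdsWithin_neBot.mp (by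
    rw [closure_ball (0 : ℂ) one_ne_zero, mem_closedBall_zero_iff, hσ])

/-- Julia's inequality. -/
lemma coe_le_betaE {f : ℂ → ℂ} {σ z : ℂ} (hf : HolSelfDisk f) (hσ : ‖σ‖ = 1) (hz : ‖z‖ < 1) :
    (((1 - ‖f z‖) / (1 + ‖f z‖) * ((1 - ‖z‖ ^ 2) / ‖σ - z‖ ^ 2) : ℝ) : EReal) ≤ betaE f σ := by
  have := nhdsWithin_ball_neBot hσ
  set φ : ℂ → ℝ := fun w =>
    (1 - ‖f z‖) / (1 + ‖f z‖) * ((1 - ‖z‖ ^ 2) * (1 + ‖w‖) / (2 * ‖1 - conj w * z‖ ^ 2))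
  have hσz : ‖σ - z‖ ≠ 0 := by
    rw [norm_ne_zero_iff, sub_ne_zero]
    rintro rfl
    exact hz.ne hσ
  have hφσ : φ σ = (1 - ‖f z‖) / (1 + ‖f z‖) * ((1 - ‖z‖ ^ 2) / ‖σ - z‖ ^ 2) := by
    simp only [φ, norm_one_sub_conj_mul_eq_norm_sub hσ, hσ]
    field_simp
    ring
  have hφ : ContinuousAt φ σ := by
    have : 2 * ‖1 - conj σ * z‖ ^ 2 ≠ 0 := by
      rw [norm_one_sub_conj_mul_eq_norm_sub hσ]; positivity
    fun_prop (disch := exact this)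
  rw [← hφσ]
  calc ((φ σ : ℝ) : EReal) = liminf (fun w => (φ w : EReal)) (𝓝[ball 0 1] σ) :=
        ((EReal.tendsto_coe.mpr (hφ.tendsto.mono_left nhdsWithin_le_nhds)).liminf_eq).symm
    _ ≤ betaE f σ := by
      refine liminf_le_liminf ?_
      filter_upwards [self_mem_nhdsWithin] with w hw
      exact EReal.coe_le_coe_iff.mpr
        (julia_quotient_le hf.1 hf.2 hz (mem_ball_zero_iff.mp hw))

lemma norm_ofReal_mul {σ : ℂ} (hσ : ‖σ‖ = 1) {r : ℝ} (hr : 0 ≤ r) : ‖(r : ℂ) * σ‖ = r := by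
  rw [norm_mul, norm_real, Real.norm_of_nonneg hr, hσ, mul_one]

lemma ofReal_mul_mem_ball {σ : ℂ} (hσ : ‖σ‖ = 1) {r : ℝ} (hr : r ∈ Set.Ioo 0 1) :
    (r : ℂ) * σ ∈ ball 0 1 := by
  rw [mem_ball_zero_iff, norm_ofReal_mul hσ hr.1.le]
  exact hr.2

lemma tendsto_ofReal_mul_nhdsWithin_ball {σ : ℂ} (hσ : ‖σ‖ = 1) :
    Tendsto (fun r : ℝ => (r : ℂ) * σ) (𝓝[<] 1) (𝓝[ball 0 1] σ) := by
  refine tendsto_nhdsWithin_iff.mpr ⟨?_, ?_⟩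
  · have h : Tendsto (fun r : ℝ => (r : ℂ) * σ) (𝓝 1) (𝓝 σ) := by
      simpa using (continuous_ofReal.mul continuous_const).tendsto (f := fun r : ℝ => (r : ℂ) * σ) 1
    exact h.mono_left nhdsWithin_le_nhds
  · filter_upwards [Ioo_mem_nhdsLT one_pos] with r hr using ofReal_mul_mem_ball hσ hr

lemma eventually_lt_radial_quotient {f : ℂ → ℂ} {σ : ℂ} (hσ : ‖σ‖ = 1) {c : ℝ}
    (hc : (c : EReal) < betaE f σ) :
    ∀ᶠ r : ℝ in 𝓝[<] 1, c < (1 - ‖f ((r : ℂ) * σ)‖) / (1 - r) := by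
  filter_upwards [(tendsto_ofReal_mul_nhdsWithin_ball hσ).eventually
    (eventually_lt_of_lt_liminf hc), Ioo_mem_nhdsLT one_pos] with r hr hr01
  rwa [EReal.coe_lt_coe_iff, norm_ofReal_mul hσ hr01.1.le] at hr

/-- Julia's inequality at `z = rσ`, solved for the radial quotient. -/
lemma radial_quotient_le {f : ℂ → ℂ} {σ : ℂ} (hf : HolSelfDisk f) (hσ : ‖σ‖ = 1) {b : ℝ}
    (hb : betaE f σ = b) {r : ℝ} (hr : r ∈ Set.Ioo 0 1) :
    (1 - ‖f ((r : ℂ) * σ)‖) / (1 - r) ≤ 2 * b / (1 + r + b * (1 - r)) := by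
  obtain ⟨hr0, hr1⟩ := hr
  have hmem := ofReal_mul_mem_ball hσ ⟨hr0, hr1⟩
  have hP : ‖f ((r : ℂ) * σ)‖ < 1 := mem_ball_zero_iff.mp (hf.2 hmem)
  have hdist : ‖σ - (r : ℂ) * σ‖ = 1 - r := by
    rw [← one_sub_mul, ← ofReal_one, ← ofReal_sub, norm_ofReal_mul hσ (by linarith)]
  have hjulia := coe_le_betaE hf hσ (mem_ball_zero_iff.mp hmem)
  rw [hb, EReal.coe_le_coe_iff, norm_ofReal_mul hσ hr0.le, hdist] at hjulia
  set P := ‖f ((r : ℂ) * σ)‖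
  have hr' : 0 < 1 - r := sub_pos.mpr hr1
  have hkey : (1 - P) * (1 + r) ≤ b * ((1 + P) * (1 - r)) := by
    have h : (1 - P) / (1 + P) * ((1 - r ^ 2) / (1 - r) ^ 2)
        = (1 - P) * (1 + r) / ((1 + P) * (1 - r)) := by
      field_simp
      ring
    rwa [h, div_le_iff₀ (by positivity)] at hjulia
  have hb0 : 0 ≤ b :=
    nonneg_of_mul_nonneg_left ((by nlinarith : 0 ≤ (1 - P) * (1 + r)).trans hkey) (by positivity)
  rw [div_le_div_iff₀ hr' (by positivity)]
  linear_combination hkey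

lemma betaE_ne_bot {f : ℂ → ℂ} {σ : ℂ} (hf : HolSelfDisk f) (hσ : ‖σ‖ = 1) : betaE f σ ≠ ⊥ :=
  ne_bot_of_le_ne_bot (EReal.coe_ne_bot _) (coe_le_betaE hf hσ (z := 0) (by simp))

lemma tendsto_radial_quotient {f : ℂ → ℂ} {σ : ℂ} (hf : HolSelfDisk f) (hσ : ‖σ‖ = 1) :
    Tendsto (fun r : ℝ => (((1 - ‖f ((r : ℂ) * σ)‖) / (1 - r) : ℝ) : EReal))
      (𝓝[<] 1) (𝓝 (betaE f σ)) := by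
  by_cases htop : betaE f σ = ⊤
  · rw [htop, EReal.tendsto_nhds_top_iff_real]
    intro c
    filter_upwards [eventually_lt_radial_quotient hσ (htop ▸ EReal.coe_lt_top c)] with r hr
    exact EReal.coe_lt_coe_iff.mpr hr
  obtain ⟨b, hb⟩ : ∃ b : ℝ, betaE f σ = b :=
    ⟨_, (EReal.coe_toReal htop (betaE_ne_bot hf hσ)).symm⟩
  rw [hb, EReal.tendsto_coe]
  refine tendsto_order.2 ⟨fun c hc => eventually_lt_radial_quotient hσ
    (hb ▸ EReal.coe_lt_coe_iff.mpr hc), fun c hc => ?_⟩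
  have hbound : Tendsto (fun r : ℝ => 2 * b / (1 + r + b * (1 - r))) (𝓝[<] 1) (𝓝 b) := by
    have h : ContinuousAt (fun r : ℝ => 2 * b / (1 + r + b * (1 - r))) 1 := by
      fun_prop (disch := norm_num)
    convert h.tendsto.mono_left nhdsWithin_le_nhds using 2
    ring
  filter_upwards [hbound.eventually_lt_const hc, Ioo_mem_nhdsLT one_pos] with r hlt hr
  exact (radial_quotient_le hf hσ hb hr).trans_lt hlt

lemma tendsto_radial_quotient_sq {f : ℂ → ℂ} {σ : ℂ} (hf : HolSelfDisk f) (hσ : ‖σ‖ = 1) :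
    Tendsto (fun r : ℝ => (((1 - ‖f ((r : ℂ) * σ)‖ ^ 2) / (1 - r ^ 2) : ℝ) : EReal))
      (𝓝[<] 1) (𝓝 (betaE f σ)) := by
  set P : ℝ → ℝ := fun r => ‖f ((r : ℂ) * σ)‖
  set g : ℝ → ℝ := fun r => (1 - P r) / (1 - r)
  have hfactor : ∀ r, g r * ((1 + P r) / (1 + r)) = (1 - P r ^ 2) / (1 - r ^ 2) := by
    intro r
    rw [div_mul_div_comm]
    congr 1 <;> ring
  have hg := tendsto_radial_quotient hf hσ
  by_cases htop : betaE f σ = ⊤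
  · rw [htop, EReal.tendsto_nhds_top_iff_real] at hg ⊢
    intro c
    filter_upwards [hg (2 * |c|), Ioo_mem_nhdsLT one_pos] with r hgr hr
    rw [EReal.coe_lt_coe_iff] at hgr ⊢
    have hk : 1 / 2 ≤ (1 + P r) / (1 + r) := by
      rw [div_le_div_iff₀ two_pos (by linarith [hr.1])]
      linarith [hr.2, norm_nonneg (f ((r : ℂ) * σ))]
    rw [← hfactor]
    nlinarith [abs_nonneg c, le_abs_self c]
  obtain ⟨b, hb⟩ : ∃ b : ℝ, betaE f σ = b :=
    ⟨_, (EReal.coe_toReal htop (betaE_ne_bot hf hσ)).symm⟩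
  rw [hb, EReal.tendsto_coe] at hg ⊢
  have hid : Tendsto (fun r : ℝ => r) (𝓝[<] 1) (𝓝 1) := tendsto_id.mono_left nhdsWithin_le_nhds
  have hP : Tendsto P (𝓝[<] 1) (𝓝 1) := by
    have h := (tendsto_const_nhds (x := (1 : ℝ))).sub
      (hg.mul ((tendsto_const_nhds (x := (1 : ℝ))).sub hid))
    rw [sub_self, mul_zero, sub_zero] at h
    refine h.congr' ?_
    filter_upwards [self_mem_nhdsWithin] with r hr
    rw [div_mul_cancel₀ _ (sub_ne_zero.mpr (ne_of_gt hr)), sub_sub_cancel]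
  have hk : Tendsto (fun r => (1 + P r) / (1 + r)) (𝓝[<] 1) (𝓝 1) := by
    have h := ((tendsto_const_nhds (x := (1 : ℝ))).add hP).div
      ((tendsto_const_nhds (x := (1 : ℝ))).add hid) (by norm_num : (1 : ℝ) + 1 ≠ 0)
    rwa [div_self (by norm_num : (1 : ℝ) + 1 ≠ 0)] at h
  simpa using (hg.mul hk).congr hfactor

/-- The boundary dilation coefficient is the radial limit of `(1-|f(rσ)|)/(1-r)`
and also of `(1-|f(rσ)|²)/(1-r²)`. -/
theorem stmt4 (f : ℂ → ℂ) (σ : ℂ) (hf : HolSelfDisk f) (hσ : ‖σ‖ = 1) :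
    Filter.Tendsto (fun r : ℝ =>
        (((1 - ‖f ((r : ℂ) * σ)‖) / (1 - r) : ℝ) : EReal))
      (nhdsWithin 1 (Set.Iio 1)) (nhds (betaE f σ)) ∧
    Filter.Tendsto (fun r : ℝ =>
        (((1 - ‖f ((r : ℂ) * σ)‖ ^ 2) / (1 - r ^ 2) : ℝ) : EReal))
      (nhdsWithin 1 (Set.Iio 1)) (nhds (betaE f σ)) :=
  ⟨tendsto_radial_quotient hf hσ, tendsto_radial_quotient_sq hf hσ⟩
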